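/- arXiv:1510.08291 — 2 statements merged into one kernel-verified Lean document; each statement's English description precedes it below -/
import Mathlib

section
/- (Moreau decomposition for norms; prox via dual-ball projection) Let E be a finite-dimensional real inner product space, ω a norm on E, s > 0 and y ∈ E. Let B = {z ∈ E : ω*(z) ≤ s}, where ω*(z) = sup{⟨z, x⟩ : x ∈ E, ω(x) ≤ 1}. Then there is a unique point q ∈ B minimizing ‖y − ·‖ over B (the metric projection of y onto B), and x* := y − q is the unique global minimizer of x ↦ (1/2)·‖x − y‖² + s·ω(x) on E; that is, prox_{sω}(y) = y − proj_{ω* ≤ s}(y). -/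
/-!
The set `B = {z | ∀ x, ⟪z, x⟫ ≤ s ω(x)}` is `{ω* ≤ s}`; it is closed and convex, so `y` has a
unique projection `q` onto it, characterised by `⟪y - q, w - q⟫ ≤ 0` for `w ∈ B`. Testing this
against `w = s z`, where `z` is a Hahn–Banach support functional of `ω` at `y - q`, gives
`⟪q, y - q⟫ = s ω(y - q)`. Together with `q ∈ B` this makes `q` a subgradient of `s ω` at `y - q`,
which is the optimality condition for the strongly convex objective `½‖x - y‖² + s ω(x)`; hence
`y - q` minimizes it, with quadratic growth `½‖x - (y - q)‖²`, so uniquely.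
-/

open scoped RealInnerProductSpace

open Metric

section

variable {E : Type*} [NormedAddCommGroup E] [InnerProductSpace ℝ E]

theorem norm_sub_le_norm_sub_iff_real_inner_le_zero {K : Set E} (hK : Convex ℝ K) {u v : E}
    (hv : v ∈ K) : (∀ w ∈ K, ‖u - v‖ ≤ ‖u - w‖) ↔ ∀ w ∈ K, ⟪u - v, w - v⟫ ≤ 0 := by
  have : Nonempty K := ⟨⟨v, hv⟩⟩
  have hbdd : BddBelow (Set.range fun w : K => ‖u - w‖) :=
    ⟨0, by rintro _ ⟨w, rfl⟩; exact norm_nonneg _⟩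
  rw [← norm_eq_iInf_iff_real_inner_le_zero hK hv]
  exact ⟨fun h => le_antisymm (le_ciInf fun w => h w w.2) (ciInf_le hbdd ⟨v, hv⟩),
    fun h w hw => h ▸ ciInf_le hbdd ⟨w, hw⟩⟩

theorem eq_of_forall_real_inner_le_zero {K : Set E} {u v v' : E} (hv : v ∈ K)
    (hv' : v' ∈ K) (h : ∀ w ∈ K, ⟪u - v, w - v⟫ ≤ 0) (h' : ∀ w ∈ K, ⟪u - v', w - v'⟫ ≤ 0) :
    v = v' := by
  have hsum : ⟪v' - v, v' - v⟫ = ⟪u - v, v' - v⟫ + ⟪u - v', v - v'⟫ := by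
    rw [← neg_sub v' v, inner_neg_right, ← sub_eq_add_neg, ← inner_sub_left,
      sub_sub_sub_cancel_left]
  have := real_inner_self_nonpos.1 (hsum ▸ add_nonpos (h v' hv') (h' v hv))
  exact (sub_eq_zero.1 this).symm

theorem half_sq_norm_sub_add_le_of_forall_add_inner_le {g : E → ℝ} {a y : E}
    (hg : ∀ x, g a + ⟪y - a, x - a⟫ ≤ g x) (x : E) :
    1 / 2 * ‖a - y‖ ^ 2 + g a + 1 / 2 * ‖x - a‖ ^ 2 ≤ 1 / 2 * ‖x - y‖ ^ 2 + g x := by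
  have hexp : ‖x - y‖ ^ 2 = ‖x - a‖ ^ 2 + 2 * ⟪x - a, a - y⟫ + ‖a - y‖ ^ 2 := by
    rw [← norm_add_sq_real, sub_add_sub_cancel]
  have hflip : ⟪x - a, a - y⟫ = -⟪y - a, x - a⟫ := by
    rw [real_inner_comm, ← inner_neg_left, neg_sub]
  linarith [hg x]

namespace Seminorm

variable (p : Seminorm ℝ E)

theorem exists_norm_le_mul [FiniteDimensional ℝ E] (hp : ∀ x, p x = 0 → x = 0) :
    ∃ C, ∀ x, ‖x‖ ≤ C * p x := by
  have hne : ∀ x ∈ sphere (0 : E) 1, p x ≠ 0 := fun x hx h => by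
    simp [hp x h] at hx
  have hcont : ContinuousOn (fun x => (p x)⁻¹) (sphere (0 : E) 1) :=
    p.convexOn.locallyLipschitz.continuous.continuousOn.inv₀ hne
  obtain ⟨C, hC⟩ := (isCompact_sphere (0 : E) 1).exists_bound_of_continuousOn hcont
  refine ⟨C, fun x => ?_⟩
  obtain rfl | hx := eq_or_ne x 0
  · simp
  have hu : ‖x‖⁻¹ • x ∈ sphere (0 : E) 1 := by simp [norm_smul, hx]
  have hpx : 0 < p x := (apply_nonneg p x).lt_of_ne (fun h => hx (hp x h.symm))
  have := hC _ hu
  simp only [map_smul_eq_mul, norm_inv, norm_norm, mul_inv, inv_inv] at this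
  rwa [Real.norm_of_nonneg (by positivity), ← div_eq_mul_inv, div_le_iff₀ hpx] at this

theorem exists_forall_inner_le_and_inner_eq [FiniteDimensional ℝ E] (x : E) :
    ∃ z : E, (∀ v, ⟪z, v⟫ ≤ p v) ∧ ⟪z, x⟫ = p x := by
  obtain rfl | hx := eq_or_ne x 0
  · exact ⟨0, by simp⟩
  let f : E →ₗ.[ℝ] ℝ := LinearPMap.mkSpanSingleton x (p x) hx
  have hfp : ∀ v : f.domain, f v ≤ p v := by
    rintro ⟨v, hv⟩
    obtain ⟨c, rfl⟩ := Submodule.mem_span_singleton.1 hv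
    rw [LinearPMap.mkSpanSingleton'_apply, smul_eq_mul, map_smul_eq_mul, Real.norm_eq_abs]
    exact mul_le_mul_of_nonneg_right (le_abs_self c) (apply_nonneg p x)
  obtain ⟨g, hgf, hgp⟩ := exists_extension_of_le_sublinear f p
    (fun c hc v => by rw [map_smul_eq_mul, Real.norm_eq_abs, abs_of_pos hc]) (map_add_le_add p) hfp
  refine ⟨(InnerProductSpace.toDual ℝ E).symm (LinearMap.toContinuousLinearMap g), fun v => ?_, ?_⟩
  · simpa using hgp v
  · have hxf : x ∈ f.domain := Submodule.mem_span_singleton_self x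
    rw [InnerProductSpace.toDual_symm_apply]
    exact (hgf ⟨x, hxf⟩).trans (LinearPMap.mkSpanSingleton'_apply_self x (p x) _ hxf)

def dualBall (s : ℝ) : Set E := {z | ∀ x, ⟪z, x⟫ ≤ s * p x}

variable {p}

theorem isClosed_dualBall (s : ℝ) : IsClosed (p.dualBall s) := by
  simp only [dualBall, Set.ofPred_forall]
  exact isClosed_iInter fun x => isClosed_le (continuous_id.inner continuous_const) continuous_const

theorem convex_dualBall (s : ℝ) : Convex ℝ (p.dualBall s) := by
  simp only [dualBall, Set.ofPred_forall]
  exact convex_iInter fun x => convex_halfSpace_le ((innerₗ E).flip x).isLinear _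

theorem zero_mem_dualBall {s : ℝ} (hs : 0 ≤ s) : 0 ∈ p.dualBall s := fun x => by
  simpa using mul_nonneg hs (apply_nonneg p x)

theorem sSup_inner_le_iff_mem_dualBall {C s : ℝ} (hC : ∀ x, ‖x‖ ≤ C * p x) (hs : 0 ≤ s) (z : E) :
    sSup ((fun x => ⟪z, x⟫) '' {x | p x ≤ 1}) ≤ s ↔ z ∈ p.dualBall s := by
  have hbdd : BddAbove ((fun x => ⟪z, x⟫) '' {x | p x ≤ 1}) := by
    refine ⟨‖z‖ * |C|, ?_⟩
    rintro _ ⟨x, hx, rfl⟩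
    calc ⟪z, x⟫ ≤ ‖z‖ * ‖x‖ := real_inner_le_norm z x
      _ ≤ ‖z‖ * |C| := by
        gcongr
        exact (hC x).trans ((mul_le_mul_of_nonneg_right (le_abs_self C) (apply_nonneg p x)).trans
          (mul_le_of_le_one_right (abs_nonneg C) hx))
  rw [csSup_le_iff hbdd ⟨0, 0, by simp, by simp⟩, Set.forall_mem_image]
  refine ⟨fun h x => ?_, fun h x hx => (h x).trans (mul_le_of_le_one_right hs hx)⟩
  rcases (apply_nonneg p x).eq_or_lt with hpx | hpx
  · have : x = 0 := norm_le_zero_iff.1 (by simpa [← hpx] using hC x)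
    simp [this]
  · have := h (x := (p x)⁻¹ • x)
      (by simp [map_smul_eq_mul, abs_of_pos hpx, inv_mul_cancel₀ hpx.ne'])
    rwa [real_inner_smul_right, inv_mul_le_iff₀ hpx, mul_comm] at this

theorem inner_eq_mul_apply_sub_of_forall_real_inner_le_zero [FiniteDimensional ℝ E] {s : ℝ}
    (hs : 0 ≤ s) {y q : E} (hq : q ∈ p.dualBall s)
    (hvar : ∀ w ∈ p.dualBall s, ⟪y - q, w - q⟫ ≤ 0) : ⟪q, y - q⟫ = s * p (y - q) := by
  obtain ⟨z, hzp, hz⟩ := p.exists_forall_inner_le_and_inner_eq (y - q)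
  have hsz : s • z ∈ p.dualBall s := fun v => by
    rw [real_inner_smul_left]
    exact mul_le_mul_of_nonneg_left (hzp v) hs
  have := hvar _ hsz
  rw [inner_sub_right, real_inner_smul_right, real_inner_comm, hz, real_inner_comm] at this
  exact le_antisymm (hq _) (by linarith)

end Seminorm

end

open Seminorm in
/-- (Moreau decomposition for norms; prox via dual-ball projection) Let `ω` be a norm on the
finite-dimensional real inner product space `E`, with dual norm
`ω*(z) = sup {⟪z, x⟫ : ω(x) ≤ 1}`, let `s > 0`, `y ∈ E`, and
`B = {z : ω*(z) ≤ s}`. Then there is a unique point `q ∈ B` minimizing `‖y − ·‖` over `B`,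
and `x* = y − q` is the unique global minimizer of `x ↦ (1/2)·‖x − y‖² + s·ω(x)`;
i.e. `prox_{sω}(y) = y − proj_{ω* ≤ s}(y)`. -/
theorem prox_norm_eq_sub_dual_ball_proj {E : Type*} [NormedAddCommGroup E]
    [InnerProductSpace ℝ E] [FiniteDimensional ℝ E]
    (ω : E → ℝ)
    (hω_add : ∀ x y, ω (x + y) ≤ ω x + ω y)
    (hω_smul : ∀ (c : ℝ) (x), ω (c • x) = |c| * ω x)
    (hω_def : ∀ x, ω x = 0 ↔ x = 0)
    (ωd : E → ℝ)
    (hωd : ∀ z, ωd z = sSup ((fun x => ⟪z, x⟫) '' {x : E | ω x ≤ 1}))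
    (s : ℝ) (hs : 0 < s) (y : E) :
    ∃ q : E,
      (ωd q ≤ s ∧ ∀ z : E, ωd z ≤ s → ‖y - q‖ ≤ ‖y - z‖) ∧
      (∀ q' : E, (ωd q' ≤ s ∧ ∀ z : E, ωd z ≤ s → ‖y - q'‖ ≤ ‖y - z‖) → q' = q) ∧
      (∀ x : E,
        (1 / 2) * ‖(y - q) - y‖ ^ 2 + s * ω (y - q) ≤ (1 / 2) * ‖x - y‖ ^ 2 + s * ω x) ∧
      (∀ x : E,
        (∀ x' : E, (1 / 2) * ‖x - y‖ ^ 2 + s * ω x ≤ (1 / 2) * ‖x' - y‖ ^ 2 + s * ω x') →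
        x = y - q) := by
  let p : Seminorm ℝ E := Seminorm.of ω hω_add fun c x => by rw [hω_smul, Real.norm_eq_abs]
  obtain ⟨C, hC⟩ := p.exists_norm_le_mul fun x => (hω_def x).1
  have hB (z : E) : ωd z ≤ s ↔ z ∈ p.dualBall s :=
    hωd z ▸ sSup_inner_le_iff_mem_dualBall hC hs.le z
  have hK : Convex ℝ (p.dualBall s) := convex_dualBall s
  obtain ⟨q, hq, hqmin⟩ := exists_norm_eq_iInf_of_complete_convex ⟨0, zero_mem_dualBall hs.le⟩
    (isClosed_dualBall s).isComplete hK y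
  have hvar := (norm_eq_iInf_iff_real_inner_le_zero hK hq).1 hqmin
  have hqω : ∀ x, ⟪q, x⟫ ≤ s * ω x := hq
  have hkey : ⟪q, y - q⟫ = s * ω (y - q) :=
    inner_eq_mul_apply_sub_of_forall_real_inner_le_zero hs.le hq hvar
  have hsub (x : E) : s * ω (y - q) + ⟪y - (y - q), x - (y - q)⟫ ≤ s * ω x := by
    rw [sub_sub_cancel, inner_sub_right, hkey]
    linarith [hqω x]
  have hprox := half_sq_norm_sub_add_le_of_forall_add_inner_le (g := fun x => s * ω x) hsub
  refine ⟨q, ⟨(hB q).2 hq, fun z hz => ?_⟩, fun q' ⟨hq', hq'min⟩ => ?_, fun x => ?_, fun x hx => ?_⟩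
  · exact (norm_sub_le_norm_sub_iff_real_inner_le_zero hK hq).2 hvar z ((hB z).1 hz)
  · exact eq_of_forall_real_inner_le_zero ((hB q').1 hq') hq
      ((norm_sub_le_norm_sub_iff_real_inner_le_zero hK ((hB q').1 hq')).1
        fun w hw => hq'min w ((hB w).2 hw)) hvar
  · linarith [hprox x, sq_nonneg ‖x - (y - q)‖]
  · have hsq : ‖x - (y - q)‖ ^ 2 ≤ 0 := by linarith [hprox x, hx (y - q)]
    exact norm_sub_eq_zero_iff.1 (pow_eq_zero_iff two_ne_zero |>.1 (hsq.antisymm (sq_nonneg _)))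
end

section
/- (Prox decomposition for the sparse ℓ1 + ℓ1/ℓ∞ penalty) Let H be a partition of {1, …, n} into nonempty groups, λ₁ > 0, λ∞ > 0 and y ∈ ℝⁿ. Let u ∈ ℝⁿ be defined componentwise by u_i = max(y_i − λ₁, 0) − max(−y_i − λ₁, 0), and let x* be the unique minimizer of x ↦ (1/2)·‖x − u‖₂² + λ∞·Σ_{g∈H} max_{i∈g} |x_i| on ℝⁿ. Then x* is also the unique minimizer of x ↦ (1/2)·‖x − y‖₂² + λ₁·‖x‖₁ + λ∞·Σ_{g∈H} max_{i∈g} |x_i| on ℝⁿ. -/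
/-!
Write `u = S_λ(y)` for the soft thresholding of `y`. Coordinatewise
`½(t - yᵢ)² + λ|t| = ½(t - uᵢ)² + (λ|t| - t(yᵢ - uᵢ)) + ½(yᵢ² - uᵢ²)`, and the middle term is
nonnegative since `|yᵢ - uᵢ| ≤ λ`; it vanishes when `t = 0` or `t uᵢ > 0`, because then
`yᵢ - uᵢ = λ sign uᵢ`. Zeroing the coordinates of `x` that do not have the sign of `u` brings
`x` closer to `u` and, for a penalty increasing in each `|xᵢ|`, does not increase the penalty;
since the prox of a convex penalty has a unique minimizer, `x*` is therefore unchanged by this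
operation. So the middle term vanishes at `x*`, which makes `x*` a minimizer of the full
objective, and every minimizer of the full objective also minimizes the prox objective at `u`.
-/

open Finset

noncomputable section

def softThreshold (lam t : ℝ) : ℝ := max (t - lam) 0 - max (-t - lam) 0

lemma abs_sub_softThreshold_le {lam : ℝ} (hlam : 0 ≤ lam) (t : ℝ) :
    |t - softThreshold lam t| ≤ lam := by
  unfold softThreshold
  rcases max_cases (t - lam) 0 with ⟨h₁, _⟩ | ⟨h₁, _⟩ <;>
    rcases max_cases (-t - lam) 0 with ⟨h₂, _⟩ | ⟨h₂, _⟩ <;>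
    rw [h₁, h₂, abs_le] <;> constructor <;> linarith

lemma mul_sub_softThreshold_le {lam : ℝ} (hlam : 0 ≤ lam) (s t : ℝ) :
    s * (t - softThreshold lam t) ≤ lam * |s| :=
  calc s * (t - softThreshold lam t) ≤ |s| * |t - softThreshold lam t| := by
        rw [← abs_mul]; exact le_abs_self _
    _ ≤ |s| * lam := by gcongr; exact abs_sub_softThreshold_le hlam t
    _ = lam * |s| := mul_comm _ _

lemma mul_sub_softThreshold_of_pos {lam s t : ℝ} (hlam : 0 ≤ lam)
    (h : 0 < s * softThreshold lam t) : s * (t - softThreshold lam t) = lam * |s| := by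
  unfold softThreshold at h ⊢
  rcases max_cases (t - lam) 0 with ⟨h₁, _⟩ | ⟨h₁, _⟩ <;>
    rcases max_cases (-t - lam) 0 with ⟨h₂, _⟩ | ⟨h₂, _⟩ <;>
    rw [h₁, h₂] at h ⊢ <;> rcases abs_cases s with ⟨hs, _⟩ | ⟨hs, _⟩ <;> rw [hs] <;> nlinarith

lemma midpoint_eq_add_div_two (s t : ℝ) : midpoint ℝ s t = (s + t) / 2 := by
  rw [midpoint_eq_smul_add, smul_eq_mul, invOf_eq_inv]; ring

def MidpointConvex {E : Type*} [AddCommGroup E] [Module ℝ E] (f : E → ℝ) : Prop :=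
  ∀ a b, f (midpoint ℝ a b) ≤ (f a + f b) / 2

lemma MidpointConvex.const_mul {E : Type*} [AddCommGroup E] [Module ℝ E] {f : E → ℝ}
    (hf : MidpointConvex f) {c : ℝ} (hc : 0 ≤ c) : MidpointConvex fun x => c * f x := by
  intro a b
  have := mul_le_mul_of_nonneg_left (hf a b) hc
  linarith

section

variable {ι : Type*}

def AbsMonotone (f : (ι → ℝ) → ℝ) : Prop :=
  ∀ ⦃a b : ι → ℝ⦄, (∀ i, |a i| ≤ |b i|) → f a ≤ f b

lemma AbsMonotone.const_mul {f : (ι → ℝ) → ℝ} (hf : AbsMonotone f) {c : ℝ} (hc : 0 ≤ c) :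
    AbsMonotone fun x => c * f x :=
  fun _ _ h => mul_le_mul_of_nonneg_left (hf h) hc

def groupL1InftyNorm (H : Finset (Finset ι)) (x : ι → ℝ) : ℝ :=
  ∑ g ∈ H, sSup ((fun i => |x i|) '' (g : Set ι))

lemma abs_le_sSup_abs_image (s : Finset ι) (x : ι → ℝ) {i : ι} (hi : i ∈ s) :
    |x i| ≤ sSup ((fun j => |x j|) '' (s : Set ι)) :=
  le_csSup (s.finite_toSet.image _).bddAbove (Set.mem_image_of_mem _ hi)

lemma sSup_abs_image_nonneg (s : Finset ι) (x : ι → ℝ) :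
    0 ≤ sSup ((fun j => |x j|) '' (s : Set ι)) :=
  Real.sSup_nonneg (Set.forall_mem_image.2 fun _ _ => abs_nonneg _)

lemma absMonotone_groupL1InftyNorm (H : Finset (Finset ι)) : AbsMonotone (groupL1InftyNorm H) :=
  fun _ b h => sum_le_sum fun g _ => Real.sSup_le
    (Set.forall_mem_image.2 fun _ hi => (h _).trans (abs_le_sSup_abs_image g b hi))
    (sSup_abs_image_nonneg g b)

lemma midpointConvex_groupL1InftyNorm (H : Finset (Finset ι)) :
    MidpointConvex (groupL1InftyNorm H) := by
  intro a b
  unfold groupL1InftyNorm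
  rw [← sum_add_distrib, sum_div]
  refine sum_le_sum fun g _ => Real.sSup_le (Set.forall_mem_image.2 fun i hi => ?_) ?_
  · calc |midpoint ℝ a b i| ≤ (|a i| + |b i|) / 2 := by
          rw [pi_midpoint_apply, midpoint_eq_add_div_two, abs_div, abs_two]
          gcongr
          exact abs_add_le _ _
      _ ≤ _ := by gcongr <;> exact abs_le_sSup_abs_image g _ hi
  · have := sSup_abs_image_nonneg g a
    have := sSup_abs_image_nonneg g b
    positivity

def truncateToSignOf (u x : ι → ℝ) : ι → ℝ := fun i => if 0 < x i * u i then x i else 0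

lemma truncateToSignOf_eq_zero_or_pos (u x : ι → ℝ) (i : ι) :
    truncateToSignOf u x i = 0 ∨ 0 < truncateToSignOf u x i * u i := by
  unfold truncateToSignOf
  split_ifs with h
  · exact Or.inr h
  · exact Or.inl rfl

variable [Fintype ι]

def proxObjective (P : (ι → ℝ) → ℝ) (c x : ι → ℝ) : ℝ := 1 / 2 * ∑ i, (x i - c i) ^ 2 + P x

lemma proxObjective_midpoint_le {P : (ι → ℝ) → ℝ} (hP : MidpointConvex P) (c a b : ι → ℝ) :
    proxObjective P c (midpoint ℝ a b) ≤
      (proxObjective P c a + proxObjective P c b) / 2 - 1 / 8 * ∑ i, (a i - b i) ^ 2 := by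
  have parallelogram : ∑ i, (midpoint ℝ a b i - c i) ^ 2 =
      (∑ i, (a i - c i) ^ 2 + ∑ i, (b i - c i) ^ 2) / 2 - 1 / 4 * ∑ i, (a i - b i) ^ 2 := by
    simp only [pi_midpoint_apply, midpoint_eq_add_div_two, mul_sum, ← sum_add_distrib,
      sum_div, ← sum_sub_distrib]
    exact sum_congr rfl fun i _ => by ring
  unfold proxObjective
  linarith [hP a b]

lemma eq_of_sum_sq_sub_nonpos {a b : ι → ℝ} (h : ∑ i, (a i - b i) ^ 2 ≤ 0) : a = b := by
  funext i
  have := (single_le_sum (fun j _ => sq_nonneg (a j - b j)) (mem_univ i)).trans h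
  nlinarith [sq_nonneg (a i - b i)]

lemma eq_of_isMinOn_proxObjective {P : (ι → ℝ) → ℝ} (hP : MidpointConvex P) {c a b : ι → ℝ}
    (ha : IsMinOn (proxObjective P c) Set.univ a) (hb : IsMinOn (proxObjective P c) Set.univ b) :
    a = b := by
  rw [isMinOn_univ_iff] at ha hb
  have := proxObjective_midpoint_le hP c a b
  have := ha (midpoint ℝ a b)
  have := hb a
  exact eq_of_sum_sq_sub_nonpos (by linarith)

lemma proxObjective_truncateToSignOf_le {P : (ι → ℝ) → ℝ} (hP : AbsMonotone P) (u x : ι → ℝ) :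
    proxObjective P u (truncateToSignOf u x) ≤ proxObjective P u x := by
  have hsq : ∀ i, (truncateToSignOf u x i - u i) ^ 2 ≤ (x i - u i) ^ 2 := fun i => by
    unfold truncateToSignOf
    split_ifs
    · exact le_rfl
    · nlinarith
  have habs : ∀ i, |truncateToSignOf u x i| ≤ |x i| := fun i => by
    unfold truncateToSignOf
    split_ifs <;> simp
  exact add_le_add (mul_le_mul_of_nonneg_left (sum_le_sum fun i _ => hsq i) (by norm_num))
    (hP habs)

lemma truncateToSignOf_eq_of_isMinOn {P : (ι → ℝ) → ℝ} (hPm : AbsMonotone P)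
    (hPc : MidpointConvex P) {u x : ι → ℝ} (hx : IsMinOn (proxObjective P u) Set.univ x) :
    truncateToSignOf u x = x :=
  eq_of_isMinOn_proxObjective hPc (isMinOn_univ_iff.2 fun z =>
    (proxObjective_truncateToSignOf_le hPm u x).trans (isMinOn_univ_iff.1 hx z)) hx

lemma proxObjective_l1_add_eq (lam : ℝ) (P : (ι → ℝ) → ℝ) (y u x : ι → ℝ) :
    proxObjective (fun z => lam * ∑ i, |z i| + P z) y x =
      proxObjective P u x + (lam * ∑ i, |x i| - ∑ i, x i * (y i - u i)) +
        ∑ i, (y i ^ 2 - u i ^ 2) / 2 := by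
  have : ∑ i, (x i - y i) ^ 2 =
      ∑ i, ((x i - u i) ^ 2 - 2 * (x i * (y i - u i)) + (y i ^ 2 - u i ^ 2)) :=
    sum_congr rfl fun i _ => by ring
  rw [sum_add_distrib, sum_sub_distrib, ← mul_sum] at this
  unfold proxObjective
  rw [← sum_div]
  linarith

lemma sum_mul_sub_softThreshold_le {lam : ℝ} (hlam : 0 ≤ lam) (y x : ι → ℝ) :
    ∑ i, x i * (y i - softThreshold lam (y i)) ≤ lam * ∑ i, |x i| := by
  rw [mul_sum]
  exact sum_le_sum fun i _ => mul_sub_softThreshold_le hlam (x i) (y i)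

section

variable {lam : ℝ} {P : (ι → ℝ) → ℝ} {y x : ι → ℝ}

lemma sum_mul_sub_softThreshold_eq_of_isMinOn (hlam : 0 ≤ lam) (hPm : AbsMonotone P)
    (hPc : MidpointConvex P)
    (hx : IsMinOn (proxObjective P fun i => softThreshold lam (y i)) Set.univ x) :
    ∑ i, x i * (y i - softThreshold lam (y i)) = lam * ∑ i, |x i| := by
  rw [mul_sum]
  refine sum_congr rfl fun i _ => ?_
  rw [← truncateToSignOf_eq_of_isMinOn hPm hPc hx]
  rcases truncateToSignOf_eq_zero_or_pos (fun i => softThreshold lam (y i)) x i with h | h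
  · simp [h]
  · exact mul_sub_softThreshold_of_pos hlam h

theorem isMinOn_proxObjective_l1_add (hlam : 0 ≤ lam) (hPm : AbsMonotone P)
    (hPc : MidpointConvex P)
    (hx : IsMinOn (proxObjective P fun i => softThreshold lam (y i)) Set.univ x) :
    IsMinOn (proxObjective (fun z => lam * ∑ i, |z i| + P z) y) Set.univ x := by
  set u := fun i => softThreshold lam (y i)
  refine isMinOn_univ_iff.2 fun z => ?_
  rw [proxObjective_l1_add_eq lam P y u x, proxObjective_l1_add_eq lam P y u z]
  linarith [isMinOn_univ_iff.1 hx z, sum_mul_sub_softThreshold_eq_of_isMinOn hlam hPm hPc hx,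
    sum_mul_sub_softThreshold_le hlam y z]

theorem eq_of_isMinOn_proxObjective_l1_add (hlam : 0 ≤ lam) (hPm : AbsMonotone P)
    (hPc : MidpointConvex P)
    (hx : IsMinOn (proxObjective P fun i => softThreshold lam (y i)) Set.univ x) {w : ι → ℝ}
    (hw : IsMinOn (proxObjective (fun z => lam * ∑ i, |z i| + P z) y) Set.univ w) :
    w = x := by
  set u := fun i => softThreshold lam (y i)
  have hw_le : proxObjective P u w ≤ proxObjective P u x := by
    have := isMinOn_univ_iff.1 hw x
    rw [proxObjective_l1_add_eq lam P y u x, proxObjective_l1_add_eq lam P y u w] at this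
    linarith [sum_mul_sub_softThreshold_eq_of_isMinOn hlam hPm hPc hx,
      sum_mul_sub_softThreshold_le hlam y w]
  exact eq_of_isMinOn_proxObjective hPc
    (isMinOn_univ_iff.2 fun z => hw_le.trans (isMinOn_univ_iff.1 hx z)) hx

end

end

end

theorem prox_decomposition_l1_group_general (n : ℕ) (H : Finset (Finset (Fin n)))
    (lam1 laminf : ℝ) (h1 : 0 < lam1) (hinf : 0 < laminf)
    (Ω : (Fin n → ℝ) → ℝ)
    (hΩ : ∀ x, Ω x = ∑ g ∈ H, sSup ((fun i => |x i|) '' (g : Set (Fin n))))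
    (y u xstar : Fin n → ℝ)
    (hu : ∀ i, u i = max (y i - lam1) 0 - max (-y i - lam1) 0)
    (hxstar : ∀ x : Fin n → ℝ,
      (1 / 2) * (∑ i, (xstar i - u i) ^ 2) + laminf * Ω xstar ≤
        (1 / 2) * (∑ i, (x i - u i) ^ 2) + laminf * Ω x) :
    (∀ x : Fin n → ℝ,
      (1 / 2) * (∑ i, (xstar i - y i) ^ 2) + lam1 * (∑ i, |xstar i|) + laminf * Ω xstar ≤
        (1 / 2) * (∑ i, (x i - y i) ^ 2) + lam1 * (∑ i, |x i|) + laminf * Ω x) ∧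
    (∀ x : Fin n → ℝ,
      (∀ x' : Fin n → ℝ,
        (1 / 2) * (∑ i, (x i - y i) ^ 2) + lam1 * (∑ i, |x i|) + laminf * Ω x ≤
          (1 / 2) * (∑ i, (x' i - y i) ^ 2) + lam1 * (∑ i, |x' i|) + laminf * Ω x') →
      x = xstar) := by
  obtain rfl : Ω = groupL1InftyNorm H := funext hΩ
  obtain rfl : u = fun i => softThreshold lam1 (y i) := funext hu
  have hPm := (absMonotone_groupL1InftyNorm H).const_mul hinf.le
  have hPc := (midpointConvex_groupL1InftyNorm H).const_mul hinf.le
  have hmin : IsMinOn (proxObjective (fun x => laminf * groupL1InftyNorm H x)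
      fun i => softThreshold lam1 (y i)) Set.univ xstar := isMinOn_univ_iff.2 hxstar
  refine ⟨fun x => ?_, fun x hx => ?_⟩
  · simpa only [proxObjective, add_assoc] using
      isMinOn_univ_iff.1 (isMinOn_proxObjective_l1_add h1.le hPm hPc hmin) x
  · refine eq_of_isMinOn_proxObjective_l1_add h1.le hPm hPc hmin (isMinOn_univ_iff.2 fun x' => ?_)
    simpa only [proxObjective, add_assoc] using hx x'

/-- (Prox decomposition for the sparse ℓ1 + ℓ1/ℓ∞ penalty) Let `H` be a partition of
`{1, …, n}` into nonempty groups, `λ₁ > 0`, `λ∞ > 0`, `y ∈ ℝⁿ`, and let `Ω` be the ℓ1/ℓ∞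
group norm `Ω(x) = ∑_{g∈H} max_{i∈g} |x_i|`. If `u` is the soft thresholding of `y` with
threshold `λ₁`, i.e. `u_i = max(y_i − λ₁, 0) − max(−y_i − λ₁, 0)`, and `x*` is the (unique)
minimizer of `x ↦ (1/2)·‖x − u‖₂² + λ∞·Ω(x)`, then `x*` is also the unique minimizer of
`x ↦ (1/2)·‖x − y‖₂² + λ₁·‖x‖₁ + λ∞·Ω(x)`. -/
theorem prox_decomposition_l1_group (n : ℕ) (H : Finset (Finset (Fin n)))
    (h_nonempty : ∀ g ∈ H, g.Nonempty)
    (h_disjoint : ∀ g ∈ H, ∀ g' ∈ H, g ≠ g' → Disjoint g g')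
    (h_cover : ∀ i : Fin n, ∃ g ∈ H, i ∈ g)
    (lam1 laminf : ℝ) (h1 : 0 < lam1) (hinf : 0 < laminf)
    (Ω : (Fin n → ℝ) → ℝ)
    (hΩ : ∀ x, Ω x = ∑ g ∈ H, sSup ((fun i => |x i|) '' (g : Set (Fin n))))
    (y u xstar : Fin n → ℝ)
    (hu : ∀ i, u i = max (y i - lam1) 0 - max (-y i - lam1) 0)
    (hxstar : ∀ x : Fin n → ℝ,
      (1 / 2) * (∑ i, (xstar i - u i) ^ 2) + laminf * Ω xstar ≤
        (1 / 2) * (∑ i, (x i - u i) ^ 2) + laminf * Ω x) :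
    (∀ x : Fin n → ℝ,
      (1 / 2) * (∑ i, (xstar i - y i) ^ 2) + lam1 * (∑ i, |xstar i|) + laminf * Ω xstar ≤
        (1 / 2) * (∑ i, (x i - y i) ^ 2) + lam1 * (∑ i, |x i|) + laminf * Ω x) ∧
    (∀ x : Fin n → ℝ,
      (∀ x' : Fin n → ℝ,
        (1 / 2) * (∑ i, (x i - y i) ^ 2) + lam1 * (∑ i, |x i|) + laminf * Ω x ≤
          (1 / 2) * (∑ i, (x' i - y i) ^ 2) + lam1 * (∑ i, |x' i|) + laminf * Ω x') →
      x = xstar) :=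
  prox_decomposition_l1_group_general n H lam1 laminf h1 hinf Ω hΩ y u xstar hu hxstar
end
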